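/- Let (x, a, p, s) = (0, 1/2, 0, 1) ∈ ℂ⁴. Then (s, ax−p) ∈ Γ, (x, a, p) lies in the closure of 𝔼, and (a, s, −p) lies in the closure of ℙ, but (x, a, p, s) does not lie in the closure of 𝔽. -/

import Mathlib

/-! Both 𝔽 and ℙ are continuous images of the open unit ball of (M₂(ℂ), operator norm); by
compactness their closures are the images of the closed unit ball. The all-entries-1/2 matrix is a
rank-one orthogonal projection, so it has norm 1 and maps to (1/2, 1, 0). Conversely, a matrix
mapping to (0, 1/2, 0, 1) has a₁₁ = 0, a₂₂ = 1/2, a₁₂a₂₁ = 0 and a₁₂ + a₂₁ = 1, so its second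
row or second column is (1, 1/2), of Euclidean length > 1. -/

/-- The operator norm of a 2×2 complex matrix, acting on the Euclidean space ℂ². -/
noncomputable def opNorm (A : Matrix (Fin 2) (Fin 2) ℂ) : ℝ :=
  ‖LinearMap.toContinuousLinearMap (Matrix.toEuclideanLin A)‖

/-- The domain 𝔽 = {(a₁₁, a₂₂, det A, a₁₂ + a₂₁) : A ∈ M₂(ℂ), ‖A‖ < 1}. -/
noncomputable def domF : Set (ℂ × ℂ × ℂ × ℂ) :=
  {w | ∃ A : Matrix (Fin 2) (Fin 2) ℂ, opNorm A < 1 ∧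
    w = (A 0 0, A 1 1, A.det, A 0 1 + A 1 0)}

/-- The closed symmetrized bidisc Γ. -/
def GammaSet : Set (ℂ × ℂ) :=
  {w | ∃ z1 z2 : ℂ, ‖z1‖ ≤ 1 ∧ ‖z2‖ ≤ 1 ∧ w = (z1 + z2, z1 * z2)}

/-- The tetrablock 𝔼. -/
def tetraE : Set (ℂ × ℂ × ℂ) :=
  {x | ∀ z1 z2 : ℂ, ‖z1‖ ≤ 1 → ‖z2‖ ≤ 1 →
    1 - x.1 * z1 - x.2.1 * z2 + x.2.2 * z1 * z2 ≠ 0}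

/-- The pentablock ℙ = {(a₂₁, a₁₁ + a₂₂, det A) : A ∈ M₂(ℂ), ‖A‖ < 1}. -/
noncomputable def pentaP : Set (ℂ × ℂ × ℂ) :=
  {w | ∃ A : Matrix (Fin 2) (Fin 2) ℂ, opNorm A < 1 ∧
    w = (A 1 0, A 0 0 + A 1 1, A.det)}

open Matrix Metric Set
open scoped Matrix.Norms.L2Operator

theorem closure_image_ball {E F : Type*} [NormedAddCommGroup E] [NormedSpace ℝ E] [ProperSpace E]
    [TopologicalSpace F] [T2Space F] {f : E → F} (hf : Continuous f) (x : E) {r : ℝ}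
    (hr : r ≠ 0) : closure (f '' ball x r) = f '' closedBall x r := by
  rw [← closure_ball x hr]
  refine (image_closure_of_isCompact ?_ hf.continuousOn).symm
  rw [closure_ball x hr]
  exact isCompact_closedBall x r

namespace Matrix

variable {𝕜 m n : Type*} [RCLike 𝕜] [Fintype m] [Fintype n] [DecidableEq n]

lemma sum_norm_sq_col_le_l2_opNorm_sq (A : Matrix m n 𝕜) (j : n) :
    ∑ i, ‖A i j‖ ^ 2 ≤ ‖A‖ ^ 2 := by
  have h := l2_opNorm_mulVec A (EuclideanSpace.single j 1)
  rw [PiLp.norm_single, norm_one, mul_one, EuclideanSpace.norm_eq] at h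
  simpa [mulVec_single_one] using (Real.sqrt_le_left (by positivity)).mp h

lemma sum_norm_sq_row_le_l2_opNorm_sq [DecidableEq m] (A : Matrix m n 𝕜) (i : m) :
    ∑ j, ‖A i j‖ ^ 2 ≤ ‖A‖ ^ 2 := by
  simpa [l2_opNorm_conjTranspose] using sum_norm_sq_col_le_l2_opNorm_sq Aᴴ i

end Matrix

lemma opNorm_eq_l2_opNorm (A : Matrix (Fin 2) (Fin 2) ℂ) : opNorm A = ‖A‖ := rfl

lemma closure_domF :
    closure domF = (fun A : Matrix (Fin 2) (Fin 2) ℂ => (A 0 0, A 1 1, A.det, A 0 1 + A 1 0)) ''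
      closedBall 0 1 := by
  rw [← closure_image_ball (by fun_prop) 0 one_ne_zero]
  congr 1
  ext w
  simp [domF, opNorm_eq_l2_opNorm, eq_comm]

lemma closure_pentaP :
    closure pentaP = (fun A : Matrix (Fin 2) (Fin 2) ℂ => (A 1 0, A 0 0 + A 1 1, A.det)) ''
      closedBall 0 1 := by
  rw [← closure_image_ball (by fun_prop) 0 one_ne_zero]
  congr 1
  ext w
  simp [pentaP, opNorm_eq_l2_opNorm, eq_comm]

lemma norm_of_const_half_le_one : ‖(of fun _ _ => 1 / 2 : Matrix (Fin 2) (Fin 2) ℂ)‖ ≤ 1 := by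
  refine IsStarProjection.norm_le _ ⟨?_, ?_⟩
  · ext i j
    simp [mul_apply]
  · ext i j
    simp

lemma one_lt_l2_opNorm_of_offDiag_eq_one {A : Matrix (Fin 2) (Fin 2) ℂ} (h11 : A 1 1 = 1 / 2)
    (hoff : A 0 1 = 1 ∨ A 1 0 = 1) : 1 < ‖A‖ := by
  have key : (1 : ℝ) + (1 / 2) ^ 2 ≤ ‖A‖ ^ 2 := by
    rcases hoff with h | h
    · simpa [Fin.sum_univ_two, h, h11] using sum_norm_sq_col_le_l2_opNorm_sq A 1
    · simpa [Fin.sum_univ_two, h, h11] using sum_norm_sq_row_le_l2_opNorm_sq A 1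
  nlinarith [norm_nonneg A]

theorem zero_half_mem_tetraE : ((0 : ℂ), (1 / 2 : ℂ), (0 : ℂ)) ∈ tetraE := by
  intro z1 z2 _ h2 h
  have : z2 = 2 := by linear_combination -2 * h
  norm_num [this] at h2

theorem half_one_zero_mem_closure_pentaP : ((1 / 2 : ℂ), (1 : ℂ), (0 : ℂ)) ∈ closure pentaP := by
  rw [closure_pentaP]
  refine ⟨_, mem_closedBall_zero_iff.mpr norm_of_const_half_le_one, ?_⟩
  norm_num [det_fin_two]

theorem zero_half_zero_one_notMem_closure_domF :
    ((0 : ℂ), (1 / 2 : ℂ), (0 : ℂ), (1 : ℂ)) ∉ closure domF := by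
  rw [closure_domF]
  rintro ⟨A, hA, hAw⟩
  simp only [Prod.mk.injEq] at hAw
  obtain ⟨h00, h11, hdet, hoff⟩ := hAw
  have hprod : A 0 1 * A 1 0 = 0 := by
    rw [det_fin_two, h00] at hdet
    linear_combination -hdet
  have hone : A 0 1 = 1 ∨ A 1 0 = 1 := by
    rcases mul_eq_zero.mp hprod with h | h
    · right; linear_combination hoff - h
    · left; linear_combination hoff - h
  exact (one_lt_l2_opNorm_of_offDiag_eq_one h11 hone).not_ge (mem_closedBall_zero_iff.mp hA)

/-- Example 2.11: for (x, a, p, s) = (0, 1/2, 0, 1), one has (s, ax−p) ∈ Γ,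
(x, a, p) ∈ closure 𝔼 and (a, s, −p) ∈ closure ℙ, but (x, a, p, s) ∉ closure 𝔽. -/
theorem stmt10 (x a p s : ℂ)
    (hx : x = 0) (ha : a = 1 / 2) (hp : p = 0) (hs : s = 1) :
    (s, a * x - p) ∈ GammaSet ∧ (x, a, p) ∈ closure tetraE ∧
    (a, s, -p) ∈ closure pentaP ∧ (x, a, p, s) ∉ closure domF := by
  subst hx ha hp hs
  refine ⟨⟨1, 0, by norm_num, by norm_num, by norm_num⟩, subset_closure zero_half_mem_tetraE,
    ?_, zero_half_zero_one_notMem_closure_domF⟩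
  simpa using half_one_zero_mem_closure_pentaP
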